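/- Let A and B be finite alphabets and let x ∈ A^ℤ and y ∈ B^ℤ be eventually periodic sequences. Then the subshift generated by x and the subshift generated by y are flow equivalent. -/

import Mathlib

open Classical

/-- The shift map `σ` on bi-infinite sequences: `σ(x)_i = x_{i+1}`. -/
def shiftMap {A : Type*} (x : ℤ → A) : ℤ → A := fun i => x (i + 1)

/-- The iterated shift `σ^k` for `k ∈ ℤ`: `σ^k(x)_i = x_{i+k}`. -/
def shiftZ {A : Type*} (k : ℤ) (x : ℤ → A) : ℤ → A := fun i => x (i + k)

/-- `x` is periodic with period `N > 0`, i.e. `σ^N(x) = x`. -/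
def IsPeriodicWith {A : Type*} (x : ℤ → A) (N : ℕ) : Prop :=
  0 < N ∧ ∀ i : ℤ, x (i + N) = x i

/-- `x` is periodic (with some period `N > 0`). -/
def IsPeriodicSeq {A : Type*} (x : ℤ → A) : Prop := ∃ N : ℕ, IsPeriodicWith x N

/-- The sequence `p(x;i,n)` obtained from `x` by removing the block `x_{i+1} ⋯ x_{i+n}`. -/
def removeBlock {A : Type*} (x : ℤ → A) (i : ℤ) (n : ℕ) : ℤ → A :=
  fun k => if k ≤ i then x k else x (k + n)

/-- `(i,n)` is an anomaly occurrence of `x`: `n > 0` and `p(x;i,n)` is periodic. -/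
def IsAnomalyOcc {A : Type*} (x : ℤ → A) (i : ℤ) (n : ℕ) : Prop :=
  0 < n ∧ IsPeriodicSeq (removeBlock x i n)

/-- `x` is eventually periodic: non-periodic, but removing some block leaves a periodic sequence. -/
def EventuallyPeriodic {A : Type*} (x : ℤ → A) : Prop :=
  ¬ IsPeriodicSeq x ∧ ∃ (i : ℤ) (n : ℕ), IsAnomalyOcc x i n

/-- The least period of an eventually periodic sequence `x`: the least period of
`p(x;i,n)` over anomaly occurrences `(i,n)` of `x`. -/
noncomputable def evLeastPeriod {A : Type*} (x : ℤ → A) : ℕ :=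
  sInf {N : ℕ | ∃ (i : ℤ) (n : ℕ), IsAnomalyOcc x i n ∧ IsPeriodicWith (removeBlock x i n) N}

/-- The anomaly size `a(x)`: the minimum of `n` over anomaly occurrences `(i,n)` of `x`. -/
noncomputable def anomalySize {A : Type*} (x : ℤ → A) : ℕ :=
  sInf {n : ℕ | ∃ i : ℤ, IsAnomalyOcc x i n}

/-- The orbit `{σ^k(x) : k ∈ ℤ}` of a bi-infinite sequence. -/
def seqOrbit {A : Type*} (x : ℤ → A) : Set (ℤ → A) := {y | ∃ k : ℤ, y = shiftZ k x}

/-- The subshift generated by `x`: the closure of its orbit in the product topology. -/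
def subshiftGen {A : Type*} [TopologicalSpace A] (x : ℤ → A) : Set (ℤ → A) :=
  closure (seqOrbit x)

/-- Two subshifts are conjugate if there is a homeomorphism between them commuting
with the shift. -/
def Conjugate {A B : Type*} [TopologicalSpace A] [TopologicalSpace B]
    (X : Set (ℤ → A)) (Y : Set (ℤ → B)) : Prop :=
  ∃ φ : X ≃ₜ Y, ∀ (u : ℤ → A) (hu : u ∈ X) (hu' : shiftMap u ∈ X),
    ((φ ⟨shiftMap u, hu'⟩ : Y) : ℤ → B) = shiftMap ((φ ⟨u, hu⟩ : Y) : ℤ → B)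

/-- The relation generating the suspension: `(x,s) ∼ (σ^n(x), s - n)`. -/
def SuspRel {A : Type*} (X : Set (ℤ → A)) : (X × ℝ) → (X × ℝ) → Prop :=
  fun p q => ∃ n : ℤ, (q.1 : ℤ → A) = shiftZ n (p.1 : ℤ → A) ∧ q.2 = p.2 - n

/-- The suspension `ΣX` of a subshift `X`. -/
def Susp {A : Type*} [TopologicalSpace A] (X : Set (ℤ → A)) : Type _ :=
  Quot (SuspRel X)

instance {A : Type*} [TopologicalSpace A] (X : Set (ℤ → A)) : TopologicalSpace (Susp X) :=
  instTopologicalSpaceQuot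

/-- The suspension flow `φ_t [x,s] = [x, s+t]`. -/
def suspFlow {A : Type*} [TopologicalSpace A] (X : Set (ℤ → A)) (t : ℝ) :
    Susp X → Susp X :=
  Quot.lift (fun p => Quot.mk _ (p.1, p.2 + t)) (by
    rintro p r ⟨n, h1, h2⟩
    exact Quot.sound ⟨n, h1, by rw [h2]; ring⟩)

/-- Two subshifts are flow equivalent if there is a homeomorphism of their suspensions
taking flow lines to flow lines in an orientation-preserving way. -/
def FlowEquiv {A B : Type*} [TopologicalSpace A] [TopologicalSpace B]
    (X : Set (ℤ → A)) (Y : Set (ℤ → B)) : Prop :=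
  ∃ h : Susp X ≃ₜ Susp Y, ∀ u : Susp X, ∃ τ : ℝ → ℝ,
    StrictMono τ ∧ Function.Bijective τ ∧ τ 0 = 0 ∧
      ∀ t : ℝ, h (suspFlow X t u) = suspFlow Y (τ t) (h u)

/-- Cell lengths `z_n` for the type-`S` skew Sturmian sequence `S(0, q/p)`, with `β = p/q`. -/
noncomputable def cellLenS (p q : ℤ) (n : ℤ) : ℕ :=
  if n < 0 then
    ({k : ℤ | (n : ℚ) < (k : ℚ) * ((p : ℚ) / (q : ℚ)) ∧
        (k : ℚ) * ((p : ℚ) / (q : ℚ)) ≤ (n : ℚ) + 1}).ncard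
  else if n = 0 then
    ({k : ℤ | 0 < (k : ℚ) * ((p : ℚ) / (q : ℚ)) ∧
        (k : ℚ) * ((p : ℚ) / (q : ℚ)) < 1}).ncard
  else
    ({k : ℤ | (n : ℚ) ≤ (k : ℚ) * ((p : ℚ) / (q : ℚ)) ∧
        (k : ℚ) * ((p : ℚ) / (q : ℚ)) < (n : ℚ) + 1}).ncard

/-- Cell lengths `z′_n` for the type-`S′` skew Sturmian sequence `S′(0, q/p)`, with `β = p/q`. -/
noncomputable def cellLenS' (p q : ℤ) (n : ℤ) : ℕ :=
  if n < 0 then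
    ({k : ℤ | (n : ℚ) ≤ (k : ℚ) * ((p : ℚ) / (q : ℚ)) ∧
        (k : ℚ) * ((p : ℚ) / (q : ℚ)) < (n : ℚ) + 1}).ncard
  else if n = 0 then
    ({k : ℤ | 0 ≤ (k : ℚ) * ((p : ℚ) / (q : ℚ)) ∧
        (k : ℚ) * ((p : ℚ) / (q : ℚ)) ≤ 1}).ncard
  else
    ({k : ℤ | (n : ℚ) < (k : ℚ) * ((p : ℚ) / (q : ℚ)) ∧
        (k : ℚ) * ((p : ℚ) / (q : ℚ)) ≤ (n : ℚ) + 1}).ncard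

/-- The position `L_n` of the leading `1` of the cell `B_n`. -/
noncomputable def cellStart (z : ℤ → ℕ) (n : ℤ) : ℤ :=
  if 0 ≤ n then n + ∑ j ∈ Finset.Ico (0 : ℤ) n, (z j : ℤ)
  else n - ∑ j ∈ Finset.Ico n (0 : ℤ), (z j : ℤ)

/-- The `{0,1}`-sequence determined by cell lengths `z`: a `1` at each position `L_n`
and `0` elsewhere. -/
noncomputable def seqOfCells (z : ℤ → ℕ) : ℤ → Fin 2 :=
  fun i => if ∃ n : ℤ, i = cellStart z n then 1 else 0

/-- The type-`S` skew Sturmian sequence `S(0, q/p)`. -/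
noncomputable def sturmS (p q : ℤ) : ℤ → Fin 2 := seqOfCells (cellLenS p q)

/-- The type-`S′` skew Sturmian sequence `S′(0, q/p)`. -/
noncomputable def sturmS' (p q : ℤ) : ℤ → Fin 2 := seqOfCells (cellLenS' p q)

/-!
An eventually periodic `x` agrees with a sequence `w` of least period `P` on a left half-line,
and with `w` delayed by the anomaly length `n` on a right half-line. So the subshift generated by
`x` is the orbit of `x`, whose points are isolated, together with the finite orbit of `w`, and
its suspension is a circle of length `P` onto which a single flow line spirals at both ends.
For a second such sequence `y`, rescale the circle by the ratio `r = P₂ / P₁` of the periods and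
send the flow line of `x` to that of `y` by a homeomorphism `κ` of `ℝ` equal to `t ↦ r t` near
`-∞` and to `t ↦ r (t - n₁) + n₂` near `+∞`: at both ends this agrees with the rescaling of the
circle up to whole periods, which is what makes the map of suspensions continuous.
-/

open Filter Topology Function

section Shift

variable {A : Type*}

lemma shiftZ_zero (x : ℤ → A) : shiftZ 0 x = x :=
  funext fun i => by simp [shiftZ]

lemma shiftZ_shiftZ (a b : ℤ) (x : ℤ → A) : shiftZ a (shiftZ b x) = shiftZ (a + b) x :=
  funext fun i => by simp only [shiftZ, add_assoc]

lemma shiftZ_eq_self_iff {d : ℤ} {x : ℤ → A} : shiftZ d x = x ↔ Periodic x d := funext_iff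

lemma isPeriodicSeq_of_shiftZ_eq_self {d : ℤ} {x : ℤ → A} (hd : d ≠ 0) (h : shiftZ d x = x) :
    IsPeriodicSeq x := by
  have hper : Periodic x |d| := by
    rcases abs_choice d with h' | h' <;> rw [h']
    · exact shiftZ_eq_self_iff.1 h
    · exact (shiftZ_eq_self_iff.1 h).neg
  exact ⟨d.natAbs, Int.natAbs_pos.2 hd, by rw [Int.natCast_natAbs]; exact hper⟩

lemma shiftZ_injective {x : ℤ → A} (hx : ¬ IsPeriodicSeq x) :
    Injective fun k : ℤ => shiftZ k x := by
  intro k k' h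
  by_contra hne
  refine hx (isPeriodicSeq_of_shiftZ_eq_self (sub_ne_zero.2 hne) ?_)
  have := congrArg (shiftZ (-k')) h
  simp only [shiftZ_shiftZ, neg_add_cancel, shiftZ_zero] at this
  rwa [neg_add_eq_sub] at this

def cylinder (u : ℤ → A) (M : ℕ) : Set (ℤ → A) := {v | ∀ c : ℤ, |c| ≤ M → v c = u c}

lemma self_mem_cylinder (u : ℤ → A) (M : ℕ) : u ∈ cylinder u M := fun _ _ => rfl

lemma mem_cylinder_comm {u v : ℤ → A} {M : ℕ} : v ∈ cylinder u M ↔ u ∈ cylinder v M :=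
  ⟨fun h c hc => (h c hc).symm, fun h c hc => (h c hc).symm⟩

lemma mem_cylinder_trans {u v z : ℤ → A} {M : ℕ} (hv : v ∈ cylinder u M)
    (hu : u ∈ cylinder z M) : v ∈ cylinder z M :=
  fun c hc => (hv c hc).trans (hu c hc)

lemma cylinder_anti {u : ℤ → A} {M M' : ℕ} (h : M ≤ M') : cylinder u M' ⊆ cylinder u M :=
  fun _ hv c hc => hv c (hc.trans (by exact_mod_cast h))

variable [TopologicalSpace A]

lemma shiftZ_mem_subshiftGen (k : ℤ) (x : ℤ → A) : shiftZ k x ∈ subshiftGen x :=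
  subset_closure ⟨k, rfl⟩

lemma self_mem_subshiftGen (x : ℤ → A) : x ∈ subshiftGen x := by
  simpa [shiftZ_zero] using shiftZ_mem_subshiftGen 0 x

lemma exists_cylinder_subset {u : ℤ → A} {U : Set (ℤ → A)} (hU : U ∈ 𝓝 u) :
    ∃ M : ℕ, cylinder u M ⊆ U := by
  obtain ⟨V, hVU, hVo, huV⟩ := mem_nhds_iff.1 hU
  obtain ⟨I, t, ht, hIt⟩ := isOpen_pi_iff.1 hVo u huV
  refine ⟨I.sup Int.natAbs, fun v hv => hVU (hIt fun a ha => ?_)⟩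
  rw [hv a (by rw [Int.abs_eq_natAbs]; exact_mod_cast Finset.le_sup (f := Int.natAbs) ha)]
  exact (ht a ha).2

lemma exists_cylinder_disjoint [T1Space A] {u : ℤ → A} {S : Set (ℤ → A)} (hS : S.Finite)
    (hu : u ∉ S) :
    ∃ M : ℕ, ∀ v ∈ S, v ∉ cylinder u M := by
  obtain ⟨M, hM⟩ := exists_cylinder_subset (hS.isClosed.isOpen_compl.mem_nhds hu)
  exact ⟨M, fun v hvS hv => hM hv hvS⟩

variable [DiscreteTopology A]

lemma isOpen_cylinder (u : ℤ → A) (M : ℕ) : IsOpen (cylinder u M) := by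
  have : cylinder u M = ⋂ c ∈ Finset.Icc (-(M : ℤ)) M, (fun v : ℤ → A => v c) ⁻¹' {u c} := by
    ext v
    simp only [cylinder, Set.mem_ofPred_eq, Set.mem_iInter, Set.mem_preimage,
      Set.mem_singleton_iff, Finset.mem_Icc, abs_le]
  rw [this]
  exact isOpen_biInter_finset fun c _ => (isOpen_discrete _).preimage (continuous_apply c)

lemma cylinder_mem_nhds (u : ℤ → A) (M : ℕ) : cylinder u M ∈ 𝓝 u :=
  (isOpen_cylinder u M).mem_nhds (self_mem_cylinder u M)

end Shift

def periodSubgroup {A : Type*} (w : ℤ → A) : AddSubgroup ℤ where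
  carrier := {d | Periodic w d}
  add_mem' := Periodic.add_period
  zero_mem' := fun _ => by rw [add_zero]
  neg_mem' := Periodic.neg

lemma IsPeriodicSeq.exists_periodic_iff_dvd {A : Type*} {w : ℤ → A} (hw : IsPeriodicSeq w) :
    ∃ P : ℕ, 0 < P ∧ ∀ d : ℤ, Periodic w d ↔ (P : ℤ) ∣ d := by
  obtain ⟨N, hN, hper⟩ := hw
  obtain ⟨a, ha⟩ := Int.subgroup_cyclic (periodSubgroup w)
  have key : ∀ d, Periodic w d ↔ a ∣ d := fun d => by
    change d ∈ periodSubgroup w ↔ _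
    rw [ha, ← AddSubgroup.zmultiples_eq_closure, Int.mem_zmultiples_iff]
  refine ⟨a.natAbs, Int.natAbs_pos.2 ?_, fun d => by rw [key, Int.natAbs_dvd]⟩
  rintro rfl
  have := (key N).1 hper
  rw [zero_dvd_iff] at this
  omega

/-- `w = p(x; i₀, n)` for an anomaly occurrence `(i₀, n)` of `x`, and `P` is the least period
of `w`. -/
structure EventuallyPeriodicRep {A : Type*} (x : ℤ → A) where
  w : ℤ → A
  i₀ : ℤ
  n : ℕ
  P : ℕ
  period_pos : 0 < P
  periodic_iff : ∀ d : ℤ, Periodic w d ↔ (P : ℤ) ∣ d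
  eq_left : ∀ a ≤ i₀, x a = w a
  eq_right : ∀ a, i₀ + n < a → x a = w (a - n)
  not_periodic : ¬ IsPeriodicSeq x

lemma EventuallyPeriodic.nonempty_rep {A : Type*} {x : ℤ → A} (hx : EventuallyPeriodic x) :
    Nonempty (EventuallyPeriodicRep x) := by
  obtain ⟨hnp, i, n, -, hw⟩ := hx
  obtain ⟨P, hP, hiff⟩ := hw.exists_periodic_iff_dvd
  refine ⟨⟨removeBlock x i n, i, n, P, hP, hiff, fun a ha => by simp [removeBlock, ha],
    fun a ha => ?_, hnp⟩⟩
  simp only [removeBlock, if_neg (show ¬ a - n ≤ i by omega), sub_add_cancel]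

namespace EventuallyPeriodicRep

variable {A : Type*} {x : ℤ → A} (d : EventuallyPeriodicRep x)

lemma shiftZ_w_eq_self_of_dvd {m : ℤ} (h : (d.P : ℤ) ∣ m) : shiftZ m d.w = d.w :=
  shiftZ_eq_self_iff.2 ((d.periodic_iff m).2 h)

lemma shiftZ_w_eq_of_dvd {j j' : ℤ} (h : (d.P : ℤ) ∣ j - j') :
    shiftZ j d.w = shiftZ j' d.w := by
  rw [show j = j' + (j - j') by ring, ← shiftZ_shiftZ, d.shiftZ_w_eq_self_of_dvd h]

lemma finite_range_shiftZ_w : (Set.range fun j => shiftZ j d.w).Finite := by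
  have hP : (0 : ℤ) < d.P := by exact_mod_cast d.period_pos
  refine ((Set.finite_Ico (0 : ℤ) d.P).image fun j => shiftZ j d.w).subset ?_
  rintro _ ⟨j, rfl⟩
  exact ⟨j % d.P, ⟨Int.emod_nonneg _ hP.ne', Int.emod_lt_of_pos _ hP⟩,
    d.shiftZ_w_eq_of_dvd (Int.mod_modEq j d.P).symm.dvd⟩

lemma dvd_sub_of_mem_cylinder {j j' : ℤ} {M : ℕ} (hM : d.P ≤ M)
    (h : shiftZ j' d.w ∈ cylinder (shiftZ j d.w) M) : (d.P : ℤ) ∣ j' - j := by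
  have hP : (0 : ℤ) < d.P := by exact_mod_cast d.period_pos
  rw [← d.periodic_iff]
  intro a
  have hdiv := Int.emod_def (a - j) d.P
  set t := (a - j) % d.P
  have ht : |t| ≤ M := by
    have := Int.emod_nonneg (a - j) hP.ne'
    have := Int.emod_lt_of_pos (a - j) hP
    rw [abs_le]; constructor <;> omega
  have hq : Periodic d.w ((a - j) / d.P * d.P) := (d.periodic_iff _).2 (dvd_mul_left _ _)
  calc d.w (a + (j' - j)) = d.w (t + j' + (a - j) / d.P * d.P) := by
        congr 1; linear_combination -hdiv
    _ = d.w (t + j) := by rw [hq]; exact h t ht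
    _ = d.w a := by rw [← hq]; congr 1; linear_combination hdiv

lemma shiftZ_mem_cylinder_left {k : ℤ} {M : ℕ} (h : k + M ≤ d.i₀) :
    shiftZ k x ∈ cylinder (shiftZ k d.w) M :=
  fun c hc => d.eq_left _ (by rw [abs_le] at hc; omega)

lemma shiftZ_mem_cylinder_right {k : ℤ} {M : ℕ} (h : d.i₀ + d.n + M < k) :
    shiftZ k x ∈ cylinder (shiftZ (k - d.n) d.w) M := fun c hc => by
  simp only [shiftZ]
  rw [d.eq_right _ (by rw [abs_le] at hc; omega)]
  congr 1; ring

lemma shiftZ_ne_shiftZ_w (k j : ℤ) : shiftZ k x ≠ shiftZ j d.w := by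
  intro h
  have hx : x = shiftZ (-k + j) d.w := by
    rw [← shiftZ_shiftZ, ← h, shiftZ_shiftZ, neg_add_cancel, shiftZ_zero]
  have hper : shiftZ d.P (shiftZ (-k + j) d.w) = shiftZ (-k + j) d.w := by
    rw [shiftZ_shiftZ]
    exact d.shiftZ_w_eq_of_dvd (by simp)
  rw [← hx] at hper
  exact d.not_periodic (isPeriodicSeq_of_shiftZ_eq_self (by exact_mod_cast d.period_pos.ne') hper)

lemma exists_eq_sub_of_mem_cylinder_left {k j : ℤ} {M : ℕ} (hM : d.P ≤ M)
    (h : shiftZ k x ∈ cylinder (shiftZ j d.w) M) (hk : k + d.P ≤ d.i₀) :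
    ∃ m, k = j - d.P * m := by
  have hkw := mem_cylinder_trans (mem_cylinder_comm.1 (d.shiftZ_mem_cylinder_left hk))
    (cylinder_anti hM h)
  obtain ⟨m, hm⟩ := d.dvd_sub_of_mem_cylinder le_rfl hkw
  exact ⟨-m, by linarith⟩

lemma exists_eq_add_of_mem_cylinder_right {k j : ℤ} {M : ℕ} (hM : d.P ≤ M)
    (h : shiftZ k x ∈ cylinder (shiftZ j d.w) M) (hk : d.i₀ + d.n + d.P < k) :
    ∃ m, k = j + d.n + d.P * m := by
  have hkw := mem_cylinder_trans (mem_cylinder_comm.1 (d.shiftZ_mem_cylinder_right hk))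
    (cylinder_anti hM h)
  obtain ⟨m, hm⟩ := d.dvd_sub_of_mem_cylinder le_rfl hkw
  exact ⟨m, by linarith⟩

lemma shiftZ_neg_mem_cylinder_w {m : ℤ} {F : ℕ} (hm : F + |d.i₀| < m) :
    shiftZ (-(d.P * m)) x ∈ cylinder d.w F := by
  have : m ≤ d.P * m :=
    le_mul_of_one_le_left (by have := abs_nonneg d.i₀; omega) (by exact_mod_cast d.period_pos)
  have h := d.shiftZ_mem_cylinder_left (k := -(d.P * m)) (M := F)
    (by have := neg_abs_le d.i₀; omega)
  rwa [d.shiftZ_w_eq_self_of_dvd (by simp)] at h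

lemma shiftZ_add_mem_cylinder_w {m : ℤ} {F : ℕ} (hm : F + |d.i₀| < m) :
    shiftZ (d.n + d.P * m) x ∈ cylinder d.w F := by
  have : m ≤ d.P * m :=
    le_mul_of_one_le_left (by have := abs_nonneg d.i₀; omega) (by exact_mod_cast d.period_pos)
  have h := d.shiftZ_mem_cylinder_right (k := d.n + d.P * m) (M := F)
    (by have := le_abs_self d.i₀; omega)
  rwa [add_sub_cancel_left, d.shiftZ_w_eq_self_of_dvd (by simp)] at h

variable [TopologicalSpace A]

lemma shiftZ_w_mem_subshiftGen (j : ℤ) : shiftZ j d.w ∈ subshiftGen x := by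
  refine mem_closure_iff_nhds.2 fun U hU => ?_
  obtain ⟨M, hM⟩ := exists_cylinder_subset hU
  set q : ℤ := |j| + M + |d.i₀|
  have hq : q ≤ d.P * q :=
    le_mul_of_one_le_left (by positivity) (by exact_mod_cast d.period_pos)
  refine ⟨shiftZ (j - d.P * q) x, hM ?_, j - d.P * q, rfl⟩
  rw [d.shiftZ_w_eq_of_dvd (j := j) (j' := j - d.P * q) (by simp)]
  exact d.shiftZ_mem_cylinder_left (by have := le_abs_self j; have := neg_abs_le d.i₀; omega)

lemma w_mem_subshiftGen : d.w ∈ subshiftGen x := by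
  simpa [shiftZ_zero] using d.shiftZ_w_mem_subshiftGen 0

variable [DiscreteTopology A]

/-- Far out on either side, shifts of `x` are close to shifts of `w`. -/
lemma exists_cylinder_finite {u : ℤ → A} (hu : ∀ j, u ≠ shiftZ j d.w) :
    ∃ M : ℕ, (∀ j, shiftZ j d.w ∉ cylinder u M) ∧ {k | shiftZ k x ∈ cylinder u M}.Finite := by
  obtain ⟨M, hM⟩ := exists_cylinder_disjoint d.finite_range_shiftZ_w
    (by rintro ⟨j, hj⟩; exact hu j hj.symm)
  refine ⟨M, fun j => hM _ ⟨j, rfl⟩,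
    (Set.finite_Icc (d.i₀ - M) (d.i₀ + d.n + M)).subset fun k hk => ?_⟩
  by_contra hk'
  rw [Set.mem_Icc, not_and_or, not_le, not_le] at hk'
  rcases hk' with h | h
  · exact hM _ ⟨k, rfl⟩
      (mem_cylinder_trans (mem_cylinder_comm.1 (d.shiftZ_mem_cylinder_left (by omega))) hk)
  · exact hM _ ⟨k - d.n, rfl⟩
      (mem_cylinder_trans (mem_cylinder_comm.1 (d.shiftZ_mem_cylinder_right (by omega))) hk)

theorem mem_subshiftGen_cases {u : ℤ → A} (hu : u ∈ subshiftGen x) :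
    (∃ k, u = shiftZ k x) ∨ ∃ j, u = shiftZ j d.w := by
  by_contra! h
  obtain ⟨M, -, hfin⟩ := d.exists_cylinder_finite h.2
  have hu' : u ∈ closure (cylinder u M ∩ seqOrbit x) :=
    (isOpen_cylinder u M).inter_closure ⟨self_mem_cylinder u M, hu⟩
  have hsub : cylinder u M ∩ seqOrbit x ⊆
      (fun k => shiftZ k x) '' {k | shiftZ k x ∈ cylinder u M} := by
    rintro v ⟨hv, k, rfl⟩
    exact ⟨k, hv, rfl⟩
  obtain ⟨k, -, hk⟩ := closure_minimal hsub (hfin.image fun k => shiftZ k x).isClosed hu'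
  exact h.1 k hk.symm

lemma isOpen_singleton_shiftZ (d : EventuallyPeriodicRep x) (k : ℤ) :
    IsOpen ({⟨shiftZ k x, shiftZ_mem_subshiftGen k x⟩} : Set (subshiftGen x)) := by
  obtain ⟨M, hw, hfin⟩ := d.exists_cylinder_finite (d.shiftZ_ne_shiftZ_w k)
  refine isOpen_singleton_of_finite_mem_nhds _
    (continuous_subtype_val.continuousAt.preimage_mem_nhds (cylinder_mem_nhds _ M))
    ((hfin.image fun k => (⟨shiftZ k x, shiftZ_mem_subshiftGen k x⟩ : subshiftGen x)).subset ?_)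
  rintro ⟨v, hv⟩ hvM
  rcases d.mem_subshiftGen_cases hv with ⟨k', rfl⟩ | ⟨j, rfl⟩
  · exact ⟨k', hvM, rfl⟩
  · exact absurd hvM (hw j)

lemma exists_cylinder_far (j : ℤ) (N : ℕ) :
    ∃ M : ℕ, d.P ≤ M ∧ ∀ k, shiftZ k x ∈ cylinder (shiftZ j d.w) M → N < |k| := by
  obtain ⟨M, hM⟩ := exists_cylinder_disjoint ((Set.finite_Icc (-(N : ℤ)) N).image
    fun k => shiftZ k x) (by rintro ⟨k, -, hk⟩; exact d.shiftZ_ne_shiftZ_w k j hk)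
  refine ⟨max M d.P, le_max_right _ _, fun k hk => ?_⟩
  by_contra hkN
  rw [not_lt, abs_le] at hkN
  exact hM _ ⟨k, hkN, rfl⟩ (cylinder_anti (le_max_left _ _) hk)

end EventuallyPeriodicRep

/-- The time change along the non-periodic flow line; `a` and `b` are the anomaly lengths of
source and target. -/
def IsTimeChange (κ : ℝ ≃o ℝ) (r a b : ℝ) : Prop :=
  (∀ t ≤ 0, κ t = r * t) ∧ ∃ T, ∀ t ≥ T, κ t = r * (t - a) + b

lemma IsTimeChange.symm {κ : ℝ ≃o ℝ} {r a b : ℝ} (hr : 0 < r) (h : IsTimeChange κ r a b) :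
    IsTimeChange κ.symm r⁻¹ b a := by
  obtain ⟨h0, T, hT⟩ := h
  refine ⟨fun s hs => ?_, r * (T - a) + b, fun s hs => ?_⟩
  · rw [OrderIso.symm_apply_eq, h0 _ (mul_nonpos_of_nonneg_of_nonpos (inv_nonneg.2 hr.le) hs)]
    field_simp
  · have : T - a ≤ r⁻¹ * (s - b) := by rw [le_inv_mul_iff₀ hr]; linarith
    rw [OrderIso.symm_apply_eq, hT _ (by linarith)]
    field_simp
    ring

lemma exists_isTimeChange {r : ℝ} (hr : 0 < r) (a b : ℝ) : ∃ κ : ℝ ≃o ℝ, IsTimeChange κ r a b := by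
  set β := b - r * a
  set T := (|β| + 1) / r
  have hT : 0 < T := by positivity
  have hβT : |β / T| < r := by
    rw [abs_div, abs_of_pos hT, div_lt_iff₀ hT]
    simp only [T]; field_simp; linarith
  set f : ℝ → ℝ := fun t => r * t + β / T * max 0 (min t T)
  have hleft : ∀ t ≤ 0, f t = r * t := fun t ht => by
    simp [f, min_eq_left (ht.trans hT.le), max_eq_left ht]
  have hright : ∀ t ≥ T, f t = r * (t - a) + b := fun t ht => by
    simp only [f, min_eq_right ht, max_eq_right hT.le]
    field_simp
    ring
  have hclamp : ∀ t t' : ℝ, t ≤ t' →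
      0 ≤ max 0 (min t' T) - max 0 (min t T) ∧ max 0 (min t' T) - max 0 (min t T) ≤ t' - t := by
    intro t t' h
    simp only [max_def, min_def]
    constructor <;> split_ifs <;> linarith
  have hmono : StrictMono f := fun t t' h => by
    obtain ⟨h0, h1⟩ := hclamp t t' h.le
    have := mul_le_mul_of_nonneg_right (neg_abs_le (β / T)) h0
    have := mul_le_mul_of_nonneg_left h1 (abs_nonneg (β / T))
    have := mul_pos (sub_pos.2 hβT) (sub_pos.2 h)
    simp only [f]
    nlinarith
  have hcont : Continuous f := by fun_prop
  have hsurj : Surjective f := by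
    intro s
    rcases le_or_gt s 0 with hs | hs
    · exact ⟨s / r, by rw [hleft _ (div_nonpos_of_nonpos_of_nonneg hs hr.le)]; field_simp⟩
    rcases le_or_gt s (f T) with hs' | hs'
    · obtain ⟨t, -, ht⟩ := intermediate_value_Icc hT.le hcont.continuousOn
        ⟨by rw [hleft 0 le_rfl, mul_zero]; exact hs.le, hs'⟩
      exact ⟨t, ht⟩
    · rw [hright T le_rfl] at hs'
      have : T - a < (s - b) / r := by rw [lt_div_iff₀ hr]; linarith
      refine ⟨(s - b) / r + a, ?_⟩
      rw [hright _ (by linarith)]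
      field_simp
      ring
  exact ⟨StrictMono.orderIsoOfSurjective f hmono hsurj, hleft, T, hright⟩

lemma flowEquiv_of_homeomorph {A B : Type*} [TopologicalSpace A] [TopologicalSpace B]
    {X : Set (ℤ → A)} {Y : Set (ℤ → B)} (h : Susp X ≃ₜ Susp Y)
    (hflow : ∀ u, ∃ (e : ℝ ≃o ℝ) (c : ℝ), ∀ t,
      h (suspFlow X t u) = suspFlow Y (e (c + t) - e c) (h u)) :
    FlowEquiv X Y := by
  refine ⟨h, fun u => ?_⟩
  obtain ⟨e, c, he⟩ := hflow u
  exact ⟨fun t => e (c + t) - e c,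
    fun t t' htt' => sub_lt_sub_right (e.strictMono (by linarith : c + t < c + t')) _,
    (((Equiv.addLeft c).trans e.toEquiv).trans (Equiv.subRight (e c))).bijective,
    by simp, he⟩

namespace Susp

variable {A : Type*} [TopologicalSpace A] {X : Set (ℤ → A)}

def mk (v : X) (s : ℝ) : Susp X := Quot.mk _ (v, s)

lemma ind {p : Susp X → Prop} (h : ∀ v s, p (mk v s)) (z : Susp X) : p z :=
  Quot.ind (fun q => h q.1 q.2) z

lemma continuous_mk : Continuous fun q : X × ℝ => mk q.1 q.2 := continuous_quot_mk

lemma suspFlow_mk (t : ℝ) (v : X) (s : ℝ) : suspFlow X t (mk v s) = mk v (s + t) := rfl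

lemma mk_add_intCast {v : ℤ → A} (hv : v ∈ X) (m : ℤ) (hv' : shiftZ m v ∈ X) (s : ℝ) :
    mk ⟨v, hv⟩ (s + m) = mk ⟨shiftZ m v, hv'⟩ s :=
  Quot.sound ⟨m, rfl, by simp⟩

lemma mk_add_intCast_of_shiftZ_eq {v : X} {m : ℤ} (h : shiftZ m (v : ℤ → A) = v) (s : ℝ) :
    mk v (s + m) = mk v s := by
  obtain ⟨v, hv⟩ := v
  rw [mk_add_intCast hv m (h ▸ hv)]
  exact congrArg (mk · s) (Subtype.ext h)

lemma tendsto_mk {ι : Type*} {l : Filter ι} {f : ι → Susp X} {g : ι → ℝ} {v₀ : X} {c₀ : ℝ}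
    (hg : Tendsto g l (𝓝 c₀))
    (hf : ∀ M : ℕ, ∀ᶠ i in l, ∃ v : X, (v : ℤ → A) ∈ cylinder v₀ M ∧ f i = mk v (g i)) :
    Tendsto f l (𝓝 (mk v₀ c₀)) := by
  intro O hO
  rw [Filter.mem_map]
  obtain ⟨U, hU, V, hV, hUV⟩ := mem_nhds_prod_iff.1 (continuous_mk.continuousAt hO)
  obtain ⟨U', hU', hU'U⟩ := (mem_nhds_subtype _ _ _).1 hU
  obtain ⟨M, hM⟩ := exists_cylinder_subset hU'
  filter_upwards [hf M, Filter.mem_map.1 (hg hV)] with i ⟨v, hv, hfi⟩ hgi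
  rw [Set.mem_preimage, hfi]
  exact hUV (show (v, g i) ∈ U ×ˢ V from ⟨hU'U (hM hv), hgi⟩)

end Susp

namespace EventuallyPeriodicRep

section Pair

variable {A B : Type*} {x : ℤ → A} {y : ℤ → B}
  (d₁ : EventuallyPeriodicRep x) (d₂ : EventuallyPeriodicRep y)

noncomputable def periodRatio : ℝ := d₂.P / d₁.P

lemma periodRatio_pos : 0 < periodRatio d₁ d₂ := by
  have := d₁.period_pos; have := d₂.period_pos
  unfold periodRatio; positivity

lemma periodRatio_mul_period : periodRatio d₁ d₂ * d₁.P = d₂.P := by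
  have := d₁.period_pos
  unfold periodRatio; field_simp

lemma periodRatio_swap : periodRatio d₂ d₁ = (periodRatio d₁ d₂)⁻¹ := (inv_div _ _).symm

variable [TopologicalSpace B]

lemma mk_w_periodRatio_eq {j j' : ℤ} (h : (d₁.P : ℤ) ∣ j' - j) (s : ℝ) :
    Susp.mk ⟨d₂.w, d₂.w_mem_subshiftGen⟩ (periodRatio d₁ d₂ * (j' + s)) =
      Susp.mk ⟨d₂.w, d₂.w_mem_subshiftGen⟩ (periodRatio d₁ d₂ * (j + s)) := by
  obtain ⟨m, hm⟩ := h
  have : periodRatio d₁ d₂ * (j' + s) = periodRatio d₁ d₂ * (j + s) + ((d₂.P * m : ℤ) : ℝ) := by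
    rw [show (j' : ℝ) = j + d₁.P * m by exact_mod_cast (by linarith : j' = j + d₁.P * m)]
    push_cast
    rw [← periodRatio_mul_period d₁ d₂]
    ring
  rw [this, Susp.mk_add_intCast_of_shiftZ_eq (d₂.shiftZ_w_eq_self_of_dvd (dvd_mul_right _ _))]

variable [TopologicalSpace A] [DiscreteTopology A] (κ : ℝ ≃o ℝ)

/-- The map `X × ℝ → ΣY` inducing the flow equivalence: `[σ^k x, s] ↦ [y, κ (k + s)]` on the
orbit of `x`, and `[σ^j w₁, s] ↦ [w₂, r (j + s)]` on the periodic orbit, `r` the ratio of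
the periods. -/
noncomputable def suspMapProd (p : subshiftGen x × ℝ) : Susp (subshiftGen y) :=
  if h : ∃ k, (p.1 : ℤ → A) = shiftZ k x then
    Susp.mk ⟨y, self_mem_subshiftGen y⟩ (κ (h.choose + p.2))
  else
    Susp.mk ⟨d₂.w, d₂.w_mem_subshiftGen⟩
      (periodRatio d₁ d₂ * (((d₁.mem_subshiftGen_cases p.1.2).resolve_left h).choose + p.2))

lemma suspMapProd_of_eq_shiftZ {u : ℤ → A} (hu : u ∈ subshiftGen x) {k : ℤ}
    (hk : u = shiftZ k x) (s : ℝ) :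
    suspMapProd d₁ d₂ κ (⟨u, hu⟩, s) = Susp.mk ⟨y, self_mem_subshiftGen y⟩ (κ (k + s)) := by
  have h : ∃ k', ((⟨u, hu⟩ : subshiftGen x) : ℤ → A) = shiftZ k' x := ⟨k, hk⟩
  have hk' : h.choose = k := shiftZ_injective d₁.not_periodic (h.choose_spec.symm.trans hk)
  unfold suspMapProd
  rw [dif_pos h, hk']

lemma suspMapProd_of_eq_shiftZ_w {u : ℤ → A} (hu : u ∈ subshiftGen x) {j : ℤ}
    (hj : u = shiftZ j d₁.w) (s : ℝ) :
    suspMapProd d₁ d₂ κ (⟨u, hu⟩, s) =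
      Susp.mk ⟨d₂.w, d₂.w_mem_subshiftGen⟩ (periodRatio d₁ d₂ * (j + s)) := by
  have h : ¬ ∃ k, ((⟨u, hu⟩ : subshiftGen x) : ℤ → A) = shiftZ k x := by
    rintro ⟨k, hk⟩
    exact d₁.shiftZ_ne_shiftZ_w k j (hk.symm.trans hj)
  have hj' := ((d₁.mem_subshiftGen_cases hu).resolve_left h).choose_spec
  unfold suspMapProd
  rw [dif_neg h]
  refine mk_w_periodRatio_eq d₁ d₂ (d₁.dvd_sub_of_mem_cylinder le_rfl ?_) s
  rw [← hj', hj]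
  exact self_mem_cylinder _ _

lemma suspMapProd_respects (p q : subshiftGen x × ℝ) (hpq : SuspRel (subshiftGen x) p q) :
    suspMapProd d₁ d₂ κ p = suspMapProd d₁ d₂ κ q := by
  obtain ⟨⟨u, hu⟩, s⟩ := p
  obtain ⟨⟨u', hu'⟩, s'⟩ := q
  obtain ⟨m, rfl, rfl⟩ := hpq
  rcases d₁.mem_subshiftGen_cases hu with ⟨k, rfl⟩ | ⟨j, rfl⟩
  · rw [suspMapProd_of_eq_shiftZ d₁ d₂ κ hu rfl,
      suspMapProd_of_eq_shiftZ d₁ d₂ κ hu' (shiftZ_shiftZ m k x)]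
    push_cast; ring_nf
  · rw [suspMapProd_of_eq_shiftZ_w d₁ d₂ κ hu rfl,
      suspMapProd_of_eq_shiftZ_w d₁ d₂ κ hu' (shiftZ_shiftZ m j d₁.w)]
    push_cast; ring_nf

noncomputable def suspMap : Susp (subshiftGen x) → Susp (subshiftGen y) :=
  Quot.lift (suspMapProd d₁ d₂ κ) (suspMapProd_respects d₁ d₂ κ)

lemma suspMap_mk (v : subshiftGen x) (s : ℝ) :
    suspMap d₁ d₂ κ (Susp.mk v s) = suspMapProd d₁ d₂ κ (v, s) := rfl

lemma suspMap_symm_suspMap [DiscreteTopology B] (z : Susp (subshiftGen x)) :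
    suspMap d₂ d₁ κ.symm (suspMap d₁ d₂ κ z) = z := by
  induction z using Susp.ind with
  | h v s =>
    obtain ⟨u, hu⟩ := v
    rcases d₁.mem_subshiftGen_cases hu with ⟨k, rfl⟩ | ⟨j, rfl⟩
    · rw [suspMap_mk, suspMapProd_of_eq_shiftZ d₁ d₂ κ hu rfl, suspMap_mk,
        suspMapProd_of_eq_shiftZ d₂ d₁ κ.symm _ (shiftZ_zero y).symm, Int.cast_zero, zero_add,
        OrderIso.symm_apply_apply, add_comm, Susp.mk_add_intCast]
    · rw [suspMap_mk, suspMapProd_of_eq_shiftZ_w d₁ d₂ κ hu rfl, suspMap_mk,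
        suspMapProd_of_eq_shiftZ_w d₂ d₁ κ.symm _ (shiftZ_zero d₂.w).symm, Int.cast_zero,
        zero_add, ← mul_assoc, periodRatio_swap, inv_mul_cancel₀ (periodRatio_pos d₁ d₂).ne',
        one_mul, add_comm, Susp.mk_add_intCast]

lemma continuousAt_suspMapProd_of_eq_shiftZ {u : ℤ → A} (hu : u ∈ subshiftGen x) {k : ℤ}
    (hk : u = shiftZ k x) (s : ℝ) : ContinuousAt (suspMapProd d₁ d₂ κ) (⟨u, hu⟩, s) := by
  subst hk
  have hev : (fun q : subshiftGen x × ℝ => Susp.mk ⟨y, self_mem_subshiftGen y⟩ (κ (k + q.2)))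
      =ᶠ[𝓝 (⟨shiftZ k x, hu⟩, s)] suspMapProd d₁ d₂ κ := by
    filter_upwards [prod_mem_nhds ((d₁.isOpen_singleton_shiftZ k).mem_nhds rfl) univ_mem]
      with ⟨⟨v, hv⟩, s'⟩ ⟨hv', _⟩
    exact (suspMapProd_of_eq_shiftZ d₁ d₂ κ hv (congrArg Subtype.val hv') s').symm
  refine ContinuousAt.congr ?_ hev
  exact (Susp.continuous_mk.comp (continuous_const.prodMk
    (κ.continuous.comp (continuous_const.add continuous_snd)))).continuousAt

lemma exists_suspMapProd_eq_of_far_left (hκ : ∀ t ≤ 0, κ t = periodRatio d₁ d₂ * t)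
    {j k : ℤ} {M F : ℕ} (hM : d₁.P ≤ M) (hkj : shiftZ k x ∈ cylinder (shiftZ j d₁.w) M)
    (hk : k + d₁.P ≤ d₁.i₀) (hkF : k + d₁.P * (F + |d₂.i₀| + 1) ≤ j) {s : ℝ} (hs : k + s ≤ 0) :
    ∃ v : subshiftGen y, (v : ℤ → B) ∈ cylinder d₂.w F ∧
      suspMapProd d₁ d₂ κ (⟨shiftZ k x, shiftZ_mem_subshiftGen k x⟩, s) =
        Susp.mk v (periodRatio d₁ d₂ * (j + s)) := by
  obtain ⟨m, rfl⟩ := d₁.exists_eq_sub_of_mem_cylinder_left hM hkj hk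
  have hm : F + |d₂.i₀| < m := by
    have := le_of_mul_le_mul_left (show (d₁.P : ℤ) * (F + |d₂.i₀| + 1) ≤ d₁.P * m by linarith)
      (by exact_mod_cast d₁.period_pos)
    linarith
  refine ⟨⟨_, shiftZ_mem_subshiftGen _ y⟩, d₂.shiftZ_neg_mem_cylinder_w hm, ?_⟩
  rw [suspMapProd_of_eq_shiftZ d₁ d₂ κ _ rfl, hκ _ hs,
    ← Susp.mk_add_intCast (self_mem_subshiftGen y)]
  congr 1
  push_cast
  rw [← periodRatio_mul_period d₁ d₂]
  ring

lemma exists_suspMapProd_eq_of_far_right {T : ℝ}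
    (hκ : ∀ t ≥ T, κ t = periodRatio d₁ d₂ * (t - d₁.n) + d₂.n)
    {j k : ℤ} {M F : ℕ} (hM : d₁.P ≤ M) (hkj : shiftZ k x ∈ cylinder (shiftZ j d₁.w) M)
    (hk : d₁.i₀ + d₁.n + d₁.P < k) (hkF : j + d₁.n + d₁.P * (F + |d₂.i₀| + 1) ≤ k) {s : ℝ}
    (hs : T ≤ k + s) :
    ∃ v : subshiftGen y, (v : ℤ → B) ∈ cylinder d₂.w F ∧
      suspMapProd d₁ d₂ κ (⟨shiftZ k x, shiftZ_mem_subshiftGen k x⟩, s) =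
        Susp.mk v (periodRatio d₁ d₂ * (j + s)) := by
  obtain ⟨m, rfl⟩ := d₁.exists_eq_add_of_mem_cylinder_right hM hkj hk
  have hm : F + |d₂.i₀| < m := by
    have := le_of_mul_le_mul_left (show (d₁.P : ℤ) * (F + |d₂.i₀| + 1) ≤ d₁.P * m by linarith)
      (by exact_mod_cast d₁.period_pos)
    linarith
  refine ⟨⟨_, shiftZ_mem_subshiftGen _ y⟩, d₂.shiftZ_add_mem_cylinder_w hm, ?_⟩
  rw [suspMapProd_of_eq_shiftZ d₁ d₂ κ _ rfl, hκ _ hs,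
    ← Susp.mk_add_intCast (self_mem_subshiftGen y)]
  congr 1
  push_cast
  rw [← periodRatio_mul_period d₁ d₂]
  ring

/-- Near a point of the periodic orbit, the points of the orbit of `x` are far out on either
end, where `κ` is affine; there the map agrees with the rescaling up to a shift of `y`
that lies close to `w₂`. -/
lemma eventually_suspMapProd_near_shiftZ_w (hκ : IsTimeChange κ (periodRatio d₁ d₂) d₁.n d₂.n)
    {j : ℤ} (hj : shiftZ j d₁.w ∈ subshiftGen x) (s : ℝ) (F : ℕ) :
    ∀ᶠ q in 𝓝 ((⟨shiftZ j d₁.w, hj⟩ : subshiftGen x), s), ∃ v : subshiftGen y,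
      (v : ℤ → B) ∈ cylinder d₂.w F ∧
        suspMapProd d₁ d₂ κ q = Susp.mk v (periodRatio d₁ d₂ * (j + q.2)) := by
  obtain ⟨hκ0, T, hκT⟩ := hκ
  obtain ⟨N₁, hN₁⟩ := exists_nat_ge (|s| + |T| + 1)
  obtain ⟨M, hPM, hfar⟩ := d₁.exists_cylinder_far j
    (N₁ + (|d₁.i₀| + d₁.n + d₁.P + |j| + d₁.P * (F + |d₂.i₀| + 1)).toNat)
  filter_upwards [prod_mem_nhds (continuous_subtype_val.continuousAt.preimage_mem_nhds
    (cylinder_mem_nhds _ M)) (Metric.ball_mem_nhds s one_pos)] with ⟨⟨v, hv⟩, s'⟩ ⟨hvM, hs'⟩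
  obtain ⟨hs's, hss'⟩ := abs_sub_lt_iff.1 (Real.dist_eq s' s ▸ Metric.mem_ball.1 hs')
  have := le_abs_self s; have := neg_abs_le s; have := le_abs_self T; have := abs_nonneg T
  rcases d₁.mem_subshiftGen_cases hv with ⟨k, rfl⟩ | ⟨j', rfl⟩
  · have := le_abs_self d₁.i₀; have := neg_abs_le d₁.i₀
    have := le_abs_self j; have := neg_abs_le j
    have : 0 ≤ (d₁.P : ℤ) * (F + |d₂.i₀| + 1) := by positivity
    rcases lt_abs.1 (hfar k hvM) with hk | hk
    · have : (N₁ : ℝ) + 1 ≤ k := by exact_mod_cast (by omega : (N₁ : ℤ) + 1 ≤ k)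
      exact exists_suspMapProd_eq_of_far_right d₁ d₂ κ hκT hPM hvM (by omega) (by omega)
        (by linarith)
    · have : (k : ℝ) + N₁ ≤ 0 := by exact_mod_cast (by omega : k + (N₁ : ℤ) ≤ 0)
      exact exists_suspMapProd_eq_of_far_left d₁ d₂ κ hκ0 hPM hvM (by omega) (by omega)
        (by linarith)
  · refine ⟨⟨d₂.w, d₂.w_mem_subshiftGen⟩, self_mem_cylinder _ _, ?_⟩
    rw [suspMapProd_of_eq_shiftZ_w d₁ d₂ κ hv rfl]
    exact mk_w_periodRatio_eq d₁ d₂ (d₁.dvd_sub_of_mem_cylinder hPM hvM) s'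

lemma continuousAt_suspMapProd_of_eq_shiftZ_w
    (hκ : IsTimeChange κ (periodRatio d₁ d₂) d₁.n d₂.n) {u : ℤ → A} (hu : u ∈ subshiftGen x)
    {j : ℤ} (hj : u = shiftZ j d₁.w) (s : ℝ) :
    ContinuousAt (suspMapProd d₁ d₂ κ) (⟨u, hu⟩, s) := by
  subst hj
  rw [ContinuousAt, suspMapProd_of_eq_shiftZ_w d₁ d₂ κ hu rfl]
  exact Susp.tendsto_mk ((continuous_const.mul (continuous_const.add continuous_snd)).tendsto _)
    (eventually_suspMapProd_near_shiftZ_w d₁ d₂ κ hκ hu s)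

lemma continuous_suspMap (hκ : IsTimeChange κ (periodRatio d₁ d₂) d₁.n d₂.n) :
    Continuous (suspMap d₁ d₂ κ) := by
  refine continuous_quot_lift _ (continuous_iff_continuousAt.2 ?_)
  rintro ⟨⟨u, hu⟩, s⟩
  rcases d₁.mem_subshiftGen_cases hu with ⟨k, hk⟩ | ⟨j, hj⟩
  · exact continuousAt_suspMapProd_of_eq_shiftZ d₁ d₂ κ hu hk s
  · exact continuousAt_suspMapProd_of_eq_shiftZ_w d₁ d₂ κ hκ hu hj s

noncomputable def suspHomeomorph [DiscreteTopology B]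
    (hκ : IsTimeChange κ (periodRatio d₁ d₂) d₁.n d₂.n) :
    Susp (subshiftGen x) ≃ₜ Susp (subshiftGen y) where
  toFun := suspMap d₁ d₂ κ
  invFun := suspMap d₂ d₁ κ.symm
  left_inv := suspMap_symm_suspMap d₁ d₂ κ
  right_inv z := by simpa using suspMap_symm_suspMap d₂ d₁ κ.symm z
  continuous_toFun := continuous_suspMap d₁ d₂ κ hκ
  continuous_invFun := continuous_suspMap d₂ d₁ κ.symm
    (by rw [periodRatio_swap]; exact hκ.symm (periodRatio_pos d₁ d₂))

lemma suspMap_suspFlow (z : Susp (subshiftGen x)) :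
    ∃ (e : ℝ ≃o ℝ) (c : ℝ), ∀ t, suspMap d₁ d₂ κ (suspFlow _ t z) =
      suspFlow _ (e (c + t) - e c) (suspMap d₁ d₂ κ z) := by
  induction z using Susp.ind with
  | h v s =>
    obtain ⟨u, hu⟩ := v
    rcases d₁.mem_subshiftGen_cases hu with ⟨k, rfl⟩ | ⟨j, rfl⟩
    · refine ⟨κ, k + s, fun t => ?_⟩
      rw [Susp.suspFlow_mk, suspMap_mk, suspMap_mk, suspMapProd_of_eq_shiftZ d₁ d₂ κ hu rfl,
        suspMapProd_of_eq_shiftZ d₁ d₂ κ hu rfl, Susp.suspFlow_mk, add_sub_cancel, add_assoc]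
    · refine ⟨OrderIso.mulLeft₀ _ (periodRatio_pos d₁ d₂), j + s, fun t => ?_⟩
      rw [Susp.suspFlow_mk, suspMap_mk, suspMap_mk, suspMapProd_of_eq_shiftZ_w d₁ d₂ κ hu rfl,
        suspMapProd_of_eq_shiftZ_w d₁ d₂ κ hu rfl, Susp.suspFlow_mk, OrderIso.mulLeft₀_apply,
        OrderIso.mulLeft₀_apply, add_sub_cancel, add_assoc]

end Pair

end EventuallyPeriodicRep

theorem stmt_5_general {A B : Type*}
    [TopologicalSpace A] [DiscreteTopology A] [TopologicalSpace B] [DiscreteTopology B]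
    (x : ℤ → A) (y : ℤ → B) (hx : EventuallyPeriodic x) (hy : EventuallyPeriodic y) :
    FlowEquiv (subshiftGen x) (subshiftGen y) := by
  obtain ⟨d₁⟩ := hx.nonempty_rep
  obtain ⟨d₂⟩ := hy.nonempty_rep
  obtain ⟨κ, hκ⟩ := exists_isTimeChange (d₁.periodRatio_pos d₂) d₁.n d₂.n
  exact flowEquiv_of_homeomorph (d₁.suspHomeomorph d₂ κ hκ) (d₁.suspMap_suspFlow d₂ κ)

/-- The subshifts generated by any two eventually periodic sequences are
flow equivalent. -/
theorem stmt_5 {A B : Type*} [Fintype A] [Fintype B]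
    [TopologicalSpace A] [DiscreteTopology A] [TopologicalSpace B] [DiscreteTopology B]
    (x : ℤ → A) (y : ℤ → B) (hx : EventuallyPeriodic x) (hy : EventuallyPeriodic y) :
    FlowEquiv (subshiftGen x) (subshiftGen y) :=
  stmt_5_general x y hx hy
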